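/- A countable linear order L is scattered if and only if some iterate of the Hausdorff derivative of L collapses L to a single equivalence class (i.e., the relation H_α eventually equals L × L). -/

import Mathlib

noncomputable section

/-- Given a relation `E` on a linear order, `hausdorffRel E a b` says that the closed
interval between `a` and `b` is covered by finitely many `E`-classes; when `E` is an
equivalence relation this is the pullback of the Hausdorff relation on the quotient. -/
def hausdorffRel {L : Type*} [LinearOrder L] (E : L → L → Prop) (a b : L) : Prop :=
  ∃ s : Finset L, ∀ c : L, min a b ≤ c → c ≤ max a b → ∃ d ∈ s, E c d

/-- The transfinite iterates of the Hausdorff derivative relation on a linear order `L`: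
`H_0` is equality, `H_{α+1}` is the pullback of the Hausdorff relation on the quotient
`L / H_α`, and at limits one takes unions. -/
def hausdorffIter (L : Type*) [LinearOrder L] (γ : Ordinal.{0}) : L → L → Prop :=
  Ordinal.limitRecOn (motive := fun _ => L → L → Prop) γ Eq
    (fun _ IH => hausdorffRel IH)
    (fun γ _ IH a b => ∃ β : Ordinal.{0}, ∃ h : β < γ, IH β h a b)

/-- A linear order is scattered if the rationals do not order-embed into it. -/
def Scattered (L : Type*) [LinearOrder L] : Prop :=
  ¬ ∃ e : ℚ → L, ∀ q r : ℚ, q < r → e q < e r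

end

/-!
If `e : ℚ → L` is an order embedding, each class of `H_γ` contains at most one point `e q`: an
interval of `ℚ` is infinite, so it is never covered by finitely many classes of the previous stage.
Conversely, the `H_γ` form an increasing chain of equivalence relations with convex classes, so
for cardinality reasons it stabilises at some `E = H_γ`. Then no two distinct classes of `E` are
at finite distance, i.e. `L / E` is densely ordered, and if `E` is not total, a choice of
representatives of its classes embeds `ℚ` into `L`.
-/

open Set

variable {L : Type*} [LinearOrder L]

theorem hausdorffRel_iff_uIcc {E : L → L → Prop} {a b : L} :
    hausdorffRel E a b ↔ ∃ s : Finset L, ∀ c ∈ uIcc a b, ∃ d ∈ s, E c d := by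
  simp only [hausdorffRel, uIcc, mem_Icc, and_imp]

def ConvexRel (E : L → L → Prop) : Prop :=
  ∀ ⦃a b c⦄, E a b → c ∈ uIcc a b → E a c

section HausdorffRel

variable {E : L → L → Prop}

theorem hausdorffRel_of_uIcc_subset {a b c d : L} (h : uIcc c d ⊆ uIcc a b)
    (hab : hausdorffRel E a b) : hausdorffRel E c d := by
  obtain ⟨s, hs⟩ := hausdorffRel_iff_uIcc.1 hab
  exact hausdorffRel_iff_uIcc.2 ⟨s, fun x hx => hs x (h hx)⟩

theorem equivalence_hausdorffRel (hE : Equivalence E) : Equivalence (hausdorffRel E) where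
  refl a := hausdorffRel_iff_uIcc.2 ⟨{a}, fun c hc => ⟨a, Finset.mem_singleton_self a, by
    rw [uIcc_self, mem_singleton_iff] at hc
    exact hc ▸ hE.refl c⟩⟩
  symm h := hausdorffRel_of_uIcc_subset (uIcc_comm _ _).subset h
  trans hab hbc := by
    obtain ⟨s, hs⟩ := hausdorffRel_iff_uIcc.1 hab
    obtain ⟨t, ht⟩ := hausdorffRel_iff_uIcc.1 hbc
    refine hausdorffRel_iff_uIcc.2 ⟨s ∪ t, fun x hx => ?_⟩
    rcases uIcc_subset_uIcc_union_uIcc hx with hx | hx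
    · obtain ⟨d, hd, hxd⟩ := hs x hx
      exact ⟨d, Finset.mem_union_left t hd, hxd⟩
    · obtain ⟨d, hd, hxd⟩ := ht x hx
      exact ⟨d, Finset.mem_union_right s hd, hxd⟩

theorem convexRel_hausdorffRel : ConvexRel (hausdorffRel E) :=
  fun _ _ _ hab hc => hausdorffRel_of_uIcc_subset (uIcc_subset_uIcc_left hc) hab

theorem le_hausdorffRel (hE : Equivalence E) (hC : ConvexRel E) : E ≤ hausdorffRel E :=
  fun a _ hab => hausdorffRel_iff_uIcc.2
    ⟨{a}, fun _ hc => ⟨a, Finset.mem_singleton_self a, hE.symm (hC hab hc)⟩⟩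

/-- Otherwise the classes of `x` and `y` would cover `[x, y]`. -/
theorem exists_between_not_rel_of_hausdorffRel_le (hE : Equivalence E)
    (hfix : hausdorffRel E ≤ E) {x y : L} (hxy : x < y) (hn : ¬E x y) :
    ∃ c, x < c ∧ c < y ∧ ¬E x c ∧ ¬E c y := by
  have hnh : ¬hausdorffRel E x y := fun h => hn (hfix x y h)
  simp only [hausdorffRel_iff_uIcc, not_exists, not_forall, not_and] at hnh
  obtain ⟨c, hc, hcs⟩ := hnh {x, y}
  rw [uIcc_of_le hxy.le] at hc
  have hcx : ¬E x c := fun h => hcs x (by simp) (hE.symm h)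
  have hcy : ¬E c y := fun h => hcs y (by simp) h
  refine ⟨c, hc.1.lt_of_ne ?_, hc.2.lt_of_ne ?_, hcx, hcy⟩
  · rintro rfl; exact hcx (hE.refl x)
  · rintro rfl; exact hcy (hE.refl c)

end HausdorffRel

section HausdorffIter

theorem hausdorffIter_zero : hausdorffIter L 0 = Eq :=
  Ordinal.limitRecOn_zero _ _ _

theorem hausdorffIter_succ (γ : Ordinal.{0}) :
    hausdorffIter L (Order.succ γ) = hausdorffRel (hausdorffIter L γ) := by
  rw [Order.succ_eq_add_one]
  exact Ordinal.limitRecOn_add_one _ _ _ _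

theorem hausdorffIter_of_isSuccLimit {γ : Ordinal.{0}} (hγ : Order.IsSuccLimit γ) {a b : L} :
    hausdorffIter L γ a b ↔ ∃ β < γ, hausdorffIter L β a b := by
  rw [hausdorffIter, Ordinal.limitRecOn_limit _ _ _ _ hγ]
  exact ⟨fun ⟨β, hβ, h⟩ => ⟨β, hβ, h⟩, fun ⟨β, hβ, h⟩ => ⟨β, hβ, h⟩⟩

/-- The three properties have to be proved together: transitivity at a limit stage needs
monotonicity below it, and monotonicity at a successor stage needs the other two. -/
theorem hausdorffIter_spec (γ : Ordinal.{0}) :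
    Equivalence (hausdorffIter L γ) ∧ ConvexRel (hausdorffIter L γ) ∧
      ∀ β ≤ γ, hausdorffIter L β ≤ hausdorffIter L γ := by
  induction γ using WellFoundedLT.induction with
  | _ γ IH =>
  rcases Ordinal.zero_or_succ_or_isSuccLimit γ with rfl | ⟨δ, rfl⟩ | hγ
  · refine hausdorffIter_zero (L := L) ▸ ⟨eq_equivalence, ?_, ?_⟩
    · rintro a b c rfl hc
      simpa [eq_comm] using hc
    · intro β hβ
      rw [nonpos_iff_eq_zero.1 hβ, hausdorffIter_zero]
  · obtain ⟨hE, hC, hmono⟩ := IH δ (Order.lt_succ δ)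
    rw [hausdorffIter_succ]
    refine ⟨equivalence_hausdorffRel hE, convexRel_hausdorffRel, fun β hβ => ?_⟩
    rcases hβ.lt_or_eq with hβ | rfl
    · exact (hmono β (Order.lt_succ_iff.1 hβ)).trans (le_hausdorffRel hE hC)
    · rw [hausdorffIter_succ]
  · have hlim {a b : L} := hausdorffIter_of_isSuccLimit hγ (a := a) (b := b)
    refine ⟨⟨fun a => hlim.2 ⟨0, hγ.bot_lt, by rw [hausdorffIter_zero]⟩, ?_, ?_⟩, ?_, ?_⟩
    · intro a b h
      obtain ⟨β, hβ, h⟩ := hlim.1 h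
      exact hlim.2 ⟨β, hβ, (IH β hβ).1.symm h⟩
    · intro a b c hab hbc
      obtain ⟨β₁, hβ₁, h₁⟩ := hlim.1 hab
      obtain ⟨β₂, hβ₂, h₂⟩ := hlim.1 hbc
      obtain ⟨hE, -, hmono⟩ := IH _ (max_lt hβ₁ hβ₂)
      exact hlim.2 ⟨_, max_lt hβ₁ hβ₂,
        hE.trans (hmono β₁ (le_max_left _ _) _ _ h₁) (hmono β₂ (le_max_right _ _) _ _ h₂)⟩
    · intro a b c hab hc
      obtain ⟨β, hβ, h⟩ := hlim.1 hab
      exact hlim.2 ⟨β, hβ, (IH β hβ).2.1 h hc⟩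
    · intro β hβ a b h
      rcases hβ.lt_or_eq with hβ | rfl
      · exact hlim.2 ⟨β, hβ, h⟩
      · exact h

theorem equivalence_hausdorffIter (γ : Ordinal.{0}) : Equivalence (hausdorffIter L γ) :=
  (hausdorffIter_spec γ).1

theorem convexRel_hausdorffIter (γ : Ordinal.{0}) : ConvexRel (hausdorffIter L γ) :=
  (hausdorffIter_spec γ).2.1

theorem hausdorffIter_mono : Monotone (hausdorffIter L) :=
  fun _ γ hβ => (hausdorffIter_spec γ).2.2 _ hβ

end HausdorffIter

theorem eq_of_hausdorffIter_of_strictMono {α : Type*} [LinearOrder α] [DenselyOrdered α]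
    {e : α → L} (he : StrictMono e) (γ : Ordinal.{0}) {q r : α}
    (h : hausdorffIter L γ (e q) (e r)) : q = r := by
  induction γ using WellFoundedLT.induction generalizing q r with
  | _ γ IH =>
  rcases Ordinal.zero_or_succ_or_isSuccLimit γ with rfl | ⟨δ, rfl⟩ | hγ
  · rw [hausdorffIter_zero] at h
    exact he.injective h
  · by_contra hqr
    rw [hausdorffIter_succ, hausdorffRel_iff_uIcc] at h
    obtain ⟨s, hs⟩ := h
    have hE := equivalence_hausdorffIter (L := L) δ
    have hfiber (d : L) : {t | hausdorffIter L δ (e t) d}.Subsingleton :=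
      fun t ht u hu => IH δ (Order.lt_succ δ) (hE.trans ht (hE.symm hu))
    have hcover : uIcc q r ⊆ ⋃ d ∈ s, {t | hausdorffIter L δ (e t) d} := fun t ht => by
      obtain ⟨d, hd, htd⟩ := hs (e t) (he.monotone.mapsTo_uIcc ht)
      exact mem_biUnion hd htd
    exact Icc_infinite (inf_lt_sup.2 hqr)
      ((s.finite_toSet.biUnion fun d _ => (hfiber d).finite).subset hcover)
  · obtain ⟨β, hβ, h⟩ := (hausdorffIter_of_isSuccLimit hγ).1 h
    exact IH β hβ h

theorem exists_hausdorffRel_hausdorffIter_le (L : Type) [LinearOrder L] :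
    ∃ γ : Ordinal.{0}, hausdorffRel (hausdorffIter L γ) ≤ hausdorffIter L γ := by
  obtain ⟨β, δ, hβδ, hne⟩ :=
    Function.not_injective_iff.1 (not_injective_of_ordinal (hausdorffIter L))
  wlog hlt : β < δ generalizing β δ
  · exact this δ β hβδ.symm hne.symm (hne.lt_or_gt.resolve_left hlt)
  refine ⟨β, ?_⟩
  calc hausdorffRel (hausdorffIter L β) = hausdorffIter L (Order.succ β) :=
        (hausdorffIter_succ β).symm
    _ ≤ hausdorffIter L δ := hausdorffIter_mono (Order.succ_le_of_lt hlt)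
    _ = hausdorffIter L β := hβδ.symm

theorem exists_strictMono_rat_of_hausdorffRel_le {E : L → L → Prop} (hE : Equivalence E)
    (hC : ConvexRel E) (hfix : hausdorffRel E ≤ E) {a b : L} (hab : ¬E a b) :
    ∃ e : ℚ → L, StrictMono e := by
  let r : L → L := fun x => (Quotient.mk ⟨E, hE⟩ x).out
  have hr (x : L) : E (r x) x := Quotient.mk_out (s := ⟨E, hE⟩) x
  have hr_eq {x y : L} (h : E x y) : r x = r y := congrArg Quotient.out (Quotient.sound h)
  have hrange {u v : L} (hu : u ∈ range r) (hv : v ∈ range r) (h : E u v) : u = v := by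
    obtain ⟨⟨x, rfl⟩, ⟨y, rfl⟩⟩ := And.intro hu hv
    exact hr_eq (hE.trans (hE.symm (hr x)) (hE.trans h (hr y)))
  have : Nontrivial (range r) := ⟨⟨r a, a, rfl⟩, ⟨r b, b, rfl⟩, fun h =>
    hab <| hE.trans (hE.symm (hr a)) <| by rw [Subtype.mk.inj h]; exact hr b⟩
  have : DenselyOrdered (range r) := ⟨by
    rintro ⟨u, hu⟩ ⟨v, hv⟩ (huv : u < v)
    obtain ⟨c, huc, hcv, hnuc, hncv⟩ := exists_between_not_rel_of_hausdorffRel_le hE hfix huv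
      fun h => huv.ne (hrange hu hv h)
    refine ⟨⟨r c, c, rfl⟩, show u < r c from ?_, show r c < v from ?_⟩
    · by_contra! h
      exact hnuc (hE.trans (hE.symm (hC (hr c) (mem_uIcc_of_le h huc.le))) (hr c))
    · by_contra! h
      exact hncv (hC (hE.symm (hr c)) (mem_uIcc_of_le hcv.le h))⟩
  obtain ⟨f⟩ := Order.embedding_from_countable_to_dense (α := ℚ) (β := range r)
  exact ⟨fun q => f q, Subtype.strictMono_coe _ |>.comp f.strictMono⟩

theorem scattered_iff_hausdorff_collapses_general (L : Type) [LinearOrder L] :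
    Scattered L ↔ ∃ γ : Ordinal.{0}, ∀ a b : L, hausdorffIter L γ a b := by
  constructor
  · intro hL
    obtain ⟨γ, hfix⟩ := exists_hausdorffRel_hausdorffIter_le L
    refine ⟨γ, fun a b => by_contra fun hab => hL ?_⟩
    obtain ⟨e, he⟩ := exists_strictMono_rat_of_hausdorffRel_le (equivalence_hausdorffIter γ)
      (convexRel_hausdorffIter γ) hfix hab
    exact ⟨e, fun q r h => he h⟩
  · rintro ⟨γ, hγ⟩ ⟨e, he⟩
    exact zero_ne_one (eq_of_hausdorffIter_of_strictMono (fun q r h => he q r h) γ (hγ (e 0) (e 1)))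

/-- a countable linear order `L` is scattered if and only if some transfinite
iterate of the Hausdorff derivative collapses `L` to a single class, i.e. the relation
`H_γ` eventually relates any two points of `L`. -/
theorem scattered_iff_hausdorff_collapses (L : Type) [LinearOrder L] [Countable L] :
    Scattered L ↔ ∃ γ : Ordinal.{0}, ∀ a b : L, hausdorffIter L γ a b :=
  scattered_iff_hausdorff_collapses_general L
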